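/- arXiv:1403.3666 — 4 statements merged into one kernel-verified Lean document; each statement's English description precedes it below -/
import Mathlib

section
/- Let n ≥ 1 and let Q be an n×n complex positive semidefinite Hermitian matrix. Then (Re(det Q))^(1/n) equals the infimum of the set { Re(trace(H * Q)) : H an n×n complex positive definite Hermitian matrix with det H = n^(-n) }; that is, (Re(det Q))^(1/n) is the greatest lower bound of this set. -/
/-!
For `H` positive semidefinite with `H = R * R`, AM-GM applied to the eigenvalues of `R * Q * R` gives
`(det H * det Q)^(1/n) ≤ tr (H * Q) / n`, so with `det H = n^(-n)` every element of the set is at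
least `(det Q)^(1/n)`. Equality holds for `H = c • P⁻¹` when `P` is positive definite, with
`c = (det P)^(1/n) / n`; applied to `P = Q + ε • 1`, whose trace pairing with `H` exceeds that of
`Q`, this gives elements below `(det (Q + ε • 1))^(1/n)`, which tends to `(det Q)^(1/n)` as `ε → 0`.
-/

open ComplexOrder Filter Topology

namespace Matrix

variable {𝕜 ι : Type*} [RCLike 𝕜] [Fintype ι] [DecidableEq ι]

theorem PosSemidef.re_det_rpow_le_re_trace_div [Nonempty ι] {M : Matrix ι ι 𝕜}
    (hM : M.PosSemidef) :
    RCLike.re M.det ^ ((1 : ℝ) / Fintype.card ι) ≤ RCLike.re M.trace / Fintype.card ι := by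
  have amgm := Real.geom_mean_le_arith_mean Finset.univ (fun _ ↦ 1) hM.1.eigenvalues
    (fun _ _ ↦ zero_le_one) (by simp [Fintype.card_pos]) (fun i _ ↦ hM.eigenvalues_nonneg i)
  simp only [Real.rpow_one, one_mul, Finset.sum_const, Finset.card_univ, nsmul_eq_mul,
    mul_one] at amgm
  rw [hM.1.det_eq_prod_eigenvalues, hM.1.trace_eq_sum_eigenvalues, one_div]
  simpa only [← RCLike.ofReal_prod, ← RCLike.ofReal_sum, RCLike.ofReal_re] using amgm

theorem PosSemidef.re_det_nonneg {M : Matrix ι ι 𝕜} (hM : M.PosSemidef) : 0 ≤ RCLike.re M.det :=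
  (RCLike.nonneg_iff.mp hM.det_nonneg).1

theorem PosSemidef.re_det_rpow_mul_re_det_rpow_le [Nonempty ι] {H Q : Matrix ι ι 𝕜}
    (hH : H.PosSemidef) (hQ : Q.PosSemidef) :
    RCLike.re H.det ^ ((1 : ℝ) / Fintype.card ι) * RCLike.re Q.det ^ ((1 : ℝ) / Fintype.card ι)
      ≤ RCLike.re (H * Q).trace / Fintype.card ι := by
  open scoped MatrixOrder in
  obtain ⟨R, hR, rfl⟩ : ∃ R : Matrix ι ι 𝕜, R.PosSemidef ∧ R * R = H :=
    ⟨CFC.sqrt H, nonneg_iff_posSemidef.mp (CFC.sqrt_nonneg H),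
      CFC.sqrt_mul_sqrt_self H (nonneg_iff_posSemidef.mpr hH)⟩
  have hRQR : (R * Q * R).PosSemidef := by
    simpa only [hR.1.eq] using hQ.mul_mul_conjTranspose_same R
  have hdet : (R * Q * R).det = (R * R).det * Q.det := by simp only [det_mul]; ring
  have htrace : (R * Q * R).trace = (R * R * Q).trace := by
    rw [trace_mul_cycle, Matrix.mul_assoc]
  have hre : RCLike.re (R * Q * R).det = RCLike.re (R * R).det * RCLike.re Q.det := by
    simp [hdet, RCLike.mul_re, (RCLike.nonneg_iff.mp hQ.det_nonneg).2]
  rw [← Real.mul_rpow hH.re_det_nonneg hQ.re_det_nonneg, ← hre, ← htrace]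
  exact hRQR.re_det_rpow_le_re_trace_div

theorem PosSemidef.re_det_rpow_le_re_trace_mul [Nonempty ι] {H Q : Matrix ι ι 𝕜}
    (hH : H.PosSemidef) (hHdet : H.det = (Fintype.card ι : 𝕜) ^ (-(Fintype.card ι : ℤ)))
    (hQ : Q.PosSemidef) :
    RCLike.re Q.det ^ ((1 : ℝ) / Fintype.card ι) ≤ RCLike.re (H * Q).trace := by
  set n := Fintype.card ι
  have hn : 0 < n := Fintype.card_pos
  have hdet_rpow : RCLike.re H.det ^ ((1 : ℝ) / n) = (n : ℝ)⁻¹ := by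
    rw [hHdet, ← RCLike.ofReal_natCast, ← RCLike.ofReal_zpow, RCLike.ofReal_re, _root_.zpow_neg,
      zpow_natCast, ← inv_pow, one_div, Real.pow_rpow_inv_natCast (by positivity) hn.ne']
  have := hH.re_det_rpow_mul_re_det_rpow_le hQ
  rw [hdet_rpow, inv_mul_eq_div] at this
  exact (div_le_div_iff_of_pos_right (by positivity)).mp this

theorem PosDef.exists_posDef_det_eq_re_trace_mul_eq [Nonempty ι] {P : Matrix ι ι 𝕜}
    (hP : P.PosDef) :
    ∃ H : Matrix ι ι 𝕜, H.PosDef ∧ H.det = (Fintype.card ι : 𝕜) ^ (-(Fintype.card ι : ℤ)) ∧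
      RCLike.re (H * P).trace = RCLike.re P.det ^ ((1 : ℝ) / Fintype.card ι) := by
  set n := Fintype.card ι
  have hn : 0 < n := Fintype.card_pos
  obtain ⟨d, hd, hdP⟩ := RCLike.pos_iff_exists_ofReal.mp hP.det_pos
  set c : ℝ := d ^ ((1 : ℝ) / n) / n
  have hc : 0 < c := by positivity
  refine ⟨(c : 𝕜) • P⁻¹, hP.inv.smul (RCLike.ofReal_pos.mpr hc), ?_, ?_⟩
  · have hcn : c ^ n = d / n ^ n := by
      rw [div_pow, one_div, Real.rpow_inv_natCast_pow hd.le hn.ne']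
    rw [det_smul, det_nonsing_inv, Ring.inverse_eq_inv', ← hdP, ← RCLike.ofReal_pow, hcn]
    push_cast [_root_.zpow_neg, zpow_natCast]
    field_simp
  · rw [smul_mul_assoc, nonsing_inv_mul _ (P.isUnit_iff_isUnit_det.mp hP.isUnit), ← hdP,
      RCLike.ofReal_re, trace_smul, trace_one, smul_eq_mul, ← RCLike.ofReal_natCast, ← RCLike.ofReal_mul, RCLike.ofReal_re]
    exact div_mul_cancel₀ _ (by positivity)

theorem PosSemidef.exists_posDef_det_eq_re_trace_mul_le [Nonempty ι] {Q : Matrix ι ι 𝕜}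
    (hQ : Q.PosSemidef) {ε : ℝ} (hε : 0 < ε) :
    ∃ H : Matrix ι ι 𝕜, H.PosDef ∧ H.det = (Fintype.card ι : 𝕜) ^ (-(Fintype.card ι : ℤ)) ∧
      RCLike.re (H * Q).trace ≤ RCLike.re (Q + ε • 1).det ^ ((1 : ℝ) / Fintype.card ι) := by
  obtain ⟨H, hH, hdet, htrace⟩ :=
    (PosDef.posSemidef_add hQ (PosDef.one.smul hε)).exists_posDef_det_eq_re_trace_mul_eq
  refine ⟨H, hH, hdet, ?_⟩
  have hH_trace : 0 ≤ RCLike.re H.trace := (RCLike.nonneg_iff.mp hH.posSemidef.trace_nonneg).1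
  rw [← htrace, Matrix.mul_add, trace_add, mul_smul_comm, Matrix.mul_one, trace_smul, map_add,
    RCLike.smul_re]
  nlinarith

end Matrix

/-- For `Q` positive semidefinite Hermitian, `(Re (det Q))^(1/n)` is the greatest lower bound
of the set of numbers `Re (trace (H * Q))` where `H` ranges over positive definite Hermitian
matrices with `det H = n^(-n)`. -/
theorem isGLB_re_trace_mul
    (n : ℕ) (hn : 1 ≤ n)
    (Q : Matrix (Fin n) (Fin n) ℂ)
    (hQ : Q.PosSemidef) :
    IsGLB {x : ℝ | ∃ H : Matrix (Fin n) (Fin n) ℂ,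
        H.PosDef ∧ H.det = (n : ℂ) ^ (-(n : ℤ)) ∧ x = ((H * Q).trace).re}
      ((Q.det.re) ^ ((1 : ℝ) / n)) := by
  have : Nonempty (Fin n) := ⟨⟨0, hn⟩⟩
  refine ⟨?_, fun b hb ↦ le_of_not_gt fun hlt ↦ ?_⟩
  · rintro _ ⟨H, hH, hdet, rfl⟩
    simpa using hH.posSemidef.re_det_rpow_le_re_trace_mul (by simpa using hdet) hQ
  have hcont : Continuous fun ε : ℝ ↦ (Q + ε • 1).det.re ^ ((1 : ℝ) / n) :=
    (Real.continuous_rpow_const (by positivity)).comp (by fun_prop)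
  have hlim : Tendsto (fun ε : ℝ ↦ (Q + ε • 1).det.re ^ ((1 : ℝ) / n)) (𝓝[>] 0)
      (𝓝 ((Q.det.re) ^ ((1 : ℝ) / n))) :=
    (hcont.tendsto' 0 _ (by simp)).mono_left nhdsWithin_le_nhds
  obtain ⟨ε, hεb, hε⟩ := ((hlim.eventually (gt_mem_nhds hlt)).and self_mem_nhdsWithin).exists
  obtain ⟨H, hH, hdet, hle⟩ := hQ.exists_posDef_det_eq_re_trace_mul_le hε
  simp only [Fintype.card_fin, RCLike.re_to_complex] at hdet hle
  exact (hb ⟨H, hH, hdet, rfl⟩).not_gt (hle.trans_lt hεb)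
end

section
/- Let n ≥ 1, let Q be an n×n complex positive semidefinite Hermitian matrix and let c ≥ 0 be a real number. Then Re(det Q) ≥ c^n if and only if for every n×n complex positive definite Hermitian matrix H with det H = n^(-n) one has Re(trace(H * Q)) ≥ c. -/
/-!
Writing `H = Bᴴ * B`, the product `H * Q` has the trace and determinant of the positive
semidefinite matrix `B * Q * Bᴴ`, so AM–GM on its eigenvalues gives
`det H * det Q ≤ (tr (H * Q) / n) ^ n`, that is `det Q ≤ tr (H * Q) ^ n` when `det H = n ^ (-n)`.
Conversely, for positive definite `Q` equality is attained at `H = (det Q) ^ (1 / n) / n • Q⁻¹`,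
and a positive semidefinite `Q` is the limit of the positive definite `Q + ε • 1`.
-/

open ComplexOrder
open scoped MatrixOrder
open Matrix Finset

theorem Real.prod_le_sum_div_card_pow {ι : Type*} [Fintype ι] {z : ι → ℝ} (hz : ∀ i, 0 ≤ z i) :
    ∏ i, z i ≤ ((∑ i, z i) / Fintype.card ι) ^ Fintype.card ι := by
  cases isEmpty_or_nonempty ι
  · simp
  have hn : (0 : ℝ) < Fintype.card ι := by exact_mod_cast Fintype.card_pos
  have amgm := Real.geom_mean_le_arith_mean univ (fun _ ↦ 1) z (fun _ _ ↦ zero_le_one)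
    (by simpa using hn) (fun i _ ↦ hz i)
  simp only [Real.rpow_one, sum_const, card_univ, nsmul_eq_mul, mul_one, one_mul] at amgm
  calc ∏ i, z i = ((∏ i, z i) ^ (Fintype.card ι : ℝ)⁻¹) ^ Fintype.card ι :=
        (Real.rpow_inv_natCast_pow (prod_nonneg fun i _ ↦ hz i) Fintype.card_ne_zero).symm
    _ ≤ ((∑ i, z i) / Fintype.card ι) ^ Fintype.card ι := by
        gcongr
        exact Real.rpow_nonneg (prod_nonneg fun i _ ↦ hz i) _

namespace Matrix

variable {ι 𝕜 : Type*} [Fintype ι] [DecidableEq ι] [RCLike 𝕜]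

theorem PosSemidef.re_det_le_re_trace_div_card_pow {A : Matrix ι ι 𝕜} (hA : A.PosSemidef) :
    RCLike.re A.det ≤ (RCLike.re A.trace / Fintype.card ι) ^ Fintype.card ι := by
  rw [hA.isHermitian.det_eq_prod_eigenvalues, hA.isHermitian.trace_eq_sum_eigenvalues,
    ← RCLike.ofReal_prod, ← RCLike.ofReal_sum, RCLike.ofReal_re, RCLike.ofReal_re]
  exact Real.prod_le_sum_div_card_pow hA.eigenvalues_nonneg

theorem PosSemidef.exists_posSemidef_det_eq_and_trace_eq_mul {H Q : Matrix ι ι 𝕜}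
    (hH : H.PosSemidef) (hQ : Q.PosSemidef) :
    ∃ M : Matrix ι ι 𝕜, M.PosSemidef ∧ M.det = (H * Q).det ∧ M.trace = (H * Q).trace := by
  obtain ⟨B, rfl⟩ := CStarAlgebra.nonneg_iff_eq_star_mul_self.mp hH.nonneg
  refine ⟨B * Q * Bᴴ, hQ.mul_mul_conjTranspose_same B, ?_, ?_⟩
  · rw [det_mul_comm, Matrix.mul_assoc]; rfl
  · rw [trace_mul_comm, Matrix.mul_assoc]; rfl

theorem PosSemidef.re_trace_mul_nonneg {H Q : Matrix ι ι 𝕜} (hH : H.PosSemidef)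
    (hQ : Q.PosSemidef) : 0 ≤ RCLike.re (H * Q).trace := by
  obtain ⟨M, hM, -, htr⟩ := hH.exists_posSemidef_det_eq_and_trace_eq_mul hQ
  exact htr ▸ RCLike.nonneg_iff.mp hM.trace_nonneg |>.1

theorem PosSemidef.re_det_le_re_trace_mul_pow [Nonempty ι] {H Q : Matrix ι ι 𝕜}
    (hH : H.PosSemidef) (hQ : Q.PosSemidef)
    (hdet : H.det = (Fintype.card ι : 𝕜) ^ (-(Fintype.card ι : ℤ))) :
    RCLike.re Q.det ≤ RCLike.re (H * Q).trace ^ Fintype.card ι := by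
  obtain ⟨M, hM, hMdet, hMtr⟩ := hH.exists_posSemidef_det_eq_and_trace_eq_mul hQ
  have hn : (0 : ℝ) < Fintype.card ι := by exact_mod_cast Fintype.card_pos
  have key := hM.re_det_le_re_trace_div_card_pow
  rw [hMdet, hMtr, det_mul, hdet, div_pow, le_div_iff₀ (by positivity)] at key
  refine le_of_eq ?_ |>.trans key
  rw [_root_.zpow_neg, zpow_natCast, ← RCLike.ofReal_natCast, ← RCLike.ofReal_pow,
    ← RCLike.ofReal_inv, RCLike.re_ofReal_mul]
  field_simp

theorem PosDef.exists_posDef_det_eq_and_re_trace_mul_pow_eq [Nonempty ι] {Q : Matrix ι ι 𝕜}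
    (hQ : Q.PosDef) :
    ∃ H : Matrix ι ι 𝕜, H.PosDef ∧ H.det = (Fintype.card ι : 𝕜) ^ (-(Fintype.card ι : ℤ)) ∧
      RCLike.re (H * Q).trace ^ Fintype.card ι = RCLike.re Q.det := by
  obtain ⟨D, hD, hQdet⟩ := RCLike.pos_iff_exists_ofReal.mp hQ.det_pos
  have hn : (0 : ℝ) < Fintype.card ι := by exact_mod_cast Fintype.card_pos
  set g := D ^ (Fintype.card ι : ℝ)⁻¹
  have hg : 0 < g := Real.rpow_pos_of_pos hD _
  have hgn : g ^ Fintype.card ι = D := Real.rpow_inv_natCast_pow hD.le Fintype.card_ne_zero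
  refine ⟨((g / Fintype.card ι : ℝ) : 𝕜) • Q⁻¹,
    hQ.inv.smul (RCLike.ofReal_pos.mpr (by positivity)), ?_, ?_⟩
  · rw [det_smul, det_nonsing_inv, ← hQdet, Ring.inverse_eq_inv', _root_.zpow_neg, zpow_natCast]
    push_cast
    rw [div_pow, ← RCLike.ofReal_pow, hgn]
    field_simp
  · rw [smul_mul_assoc, nonsing_inv_mul _ (hQ.isUnit.map detMonoidHom), trace_smul, trace_one,
      smul_eq_mul, RCLike.re_ofReal_mul, RCLike.natCast_re, ← hQdet, RCLike.ofReal_re,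
      div_mul_cancel₀ _ hn.ne', hgn]

theorem re_det_le_of_forall_le_re_det_add_smul_one {A : Matrix ι ι 𝕜} {x : ℝ}
    (h : ∀ ε : ℝ, 0 < ε → x ≤ RCLike.re (A + (ε : 𝕜) • 1).det) : x ≤ RCLike.re A.det := by
  have hcont : Continuous fun ε : ℝ ↦ RCLike.re (A + (ε : 𝕜) • 1).det := by fun_prop
  have := (hcont.tendsto 0).mono_left (nhdsWithin_le_nhds (s := Set.Ioi 0))
  simp only [RCLike.ofReal_zero, zero_smul, add_zero] at this
  exact ge_of_tendsto this (eventually_nhdsWithin_of_forall fun ε hε ↦ h ε hε)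

theorem PosSemidef.pow_le_re_det_of_forall_le_re_trace_mul [Nonempty ι] {Q : Matrix ι ι 𝕜}
    (hQ : Q.PosSemidef) {c : ℝ} (hc : 0 ≤ c)
    (h : ∀ H : Matrix ι ι 𝕜, H.PosDef → H.det = (Fintype.card ι : 𝕜) ^ (-(Fintype.card ι : ℤ)) →
      c ≤ RCLike.re (H * Q).trace) :
    c ^ Fintype.card ι ≤ RCLike.re Q.det := by
  refine re_det_le_of_forall_le_re_det_add_smul_one fun ε hε ↦ ?_
  have hQε : (Q + (ε : 𝕜) • 1).PosDef :=
    PosDef.posSemidef_add hQ (PosDef.one.smul (RCLike.ofReal_pos.mpr hε))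
  obtain ⟨H, hH, hHdet, hHtr⟩ := hQε.exists_posDef_det_eq_and_re_trace_mul_pow_eq
  have hmono : RCLike.re (H * Q).trace ≤ RCLike.re (H * (Q + (ε : 𝕜) • 1)).trace := by
    rw [Matrix.mul_add, trace_add, map_add, mul_smul_comm, Matrix.mul_one, trace_smul,
      smul_eq_mul, RCLike.re_ofReal_mul]
    exact le_add_of_nonneg_right
      (mul_nonneg hε.le (RCLike.nonneg_iff.mp hH.posSemidef.trace_nonneg).1)
  exact hHtr ▸ pow_le_pow_left₀ hc ((h H hH hHdet).trans hmono) _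

end Matrix

/-- For `Q` positive semidefinite Hermitian and `c ≥ 0`, one has `Re (det Q) ≥ c^n` iff
`Re (trace (H * Q)) ≥ c` for every positive definite Hermitian `H` with `det H = n^(-n)`. -/
theorem re_det_ge_pow_iff_forall_re_trace_ge
    (n : ℕ) (hn : 1 ≤ n)
    (Q : Matrix (Fin n) (Fin n) ℂ)
    (hQ : Q.PosSemidef) (c : ℝ) (hc : 0 ≤ c) :
    c ^ n ≤ Q.det.re ↔
      ∀ H : Matrix (Fin n) (Fin n) ℂ,
        H.PosDef → H.det = (n : ℂ) ^ (-(n : ℤ)) → c ≤ ((H * Q).trace).re := by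
  have : Nonempty (Fin n) := Fin.pos_iff_nonempty.mp hn
  constructor
  · intro hdet H hH hHdet
    have hQH := hH.posSemidef.re_det_le_re_trace_mul_pow hQ (by rwa [Fintype.card_fin])
    rw [Fintype.card_fin] at hQH
    exact le_of_pow_le_pow_left₀ (by omega) (hH.posSemidef.re_trace_mul_nonneg hQ)
      (hdet.trans hQH)
  · intro h
    simpa using hQ.pow_le_re_det_of_forall_le_re_trace_mul hc (by simpa using h)
end

section
/- Let 0 < l < ∞, let ω : [0,l] → ℝ be a modulus of continuity, and let ω̄ : [0,l] → ℝ be the minimal concave majorant of ω, i.e. ω̄ is concave on [0,l], ω(t) ≤ ω̄(t) for all t ∈ [0,l], and ω̄ ≤ g for every function g that is concave on [0,l] and satisfies ω ≤ g on [0,l]. Then for every t > 0 and η > 0 with ηt ∈ [0,l] and t ∈ [0,l], one has ω(ηt) ≤ ω̄(ηt) ≤ (1+η)·ω(t). -/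
/-!
Subadditivity and monotonicity give `ω s ≤ ⌈s / t⌉ ω t ≤ (1 + s / t) ω t` on `[0, l]`, so the
affine function `s ↦ (1 + s / t) ω t` is a concave majorant of `ω`. By minimality `ω̄` lies below
it, and at `s = ηt` it equals `(1 + η) ω t`.
-/

open Set

section Modulus

variable {ω : ℝ → ℝ} {l : ℝ} (hmono : MonotoneOn ω (Icc 0 l))
  (hsub : ∀ s t : ℝ, 0 ≤ s → 0 ≤ t → s + t ≤ l → ω (s + t) ≤ ω s + ω t) (hzero : ω 0 = 0)

include hmono hzero in
theorem modulus_nonneg {t : ℝ} (ht : t ∈ Icc 0 l) : 0 ≤ ω t :=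
  hzero ▸ hmono ⟨le_rfl, ht.1.trans ht.2⟩ ht ht.1

include hmono hsub hzero in
theorem modulus_le_nat_mul {t : ℝ} (ht : t ∈ Icc 0 l) :
    ∀ (n : ℕ) {s : ℝ}, s ∈ Icc 0 l → s ≤ n * t → ω s ≤ n * ω t
  | 0, s, hs, hsn => by
    obtain rfl : s = 0 := le_antisymm (by simpa using hsn) hs.1
    simp [hzero]
  | n + 1, s, hs, hsn => by
    have hωt := modulus_nonneg hmono hzero ht
    push_cast at hsn ⊢
    rcases le_or_gt s t with hst | hts
    · have hn : (0 : ℝ) ≤ n * ω t := mul_nonneg n.cast_nonneg hωt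
      linarith [hmono hs ht hst]
    · have hsplit : ω s ≤ ω t + ω (s - t) := by
        simpa using hsub t (s - t) ht.1 (by linarith) (by linarith [hs.2])
      have hrest : ω (s - t) ≤ n * ω t :=
        modulus_le_nat_mul ht n ⟨by linarith, by linarith [hs.2, ht.1]⟩ (by linarith)
      linarith

include hmono hsub hzero in
theorem modulus_le_affine {t : ℝ} (ht₀ : 0 < t) (htl : t ≤ l) {s : ℝ} (hs : s ∈ Icc 0 l) :
    ω s ≤ (1 + s / t) * ω t := by
  have ht : t ∈ Icc 0 l := ⟨ht₀.le, htl⟩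
  have hst : 0 ≤ s / t := div_nonneg hs.1 ht₀.le
  have hceil : s ≤ ⌈s / t⌉₊ * t := (div_le_iff₀ ht₀).1 (Nat.le_ceil _)
  calc ω s ≤ ⌈s / t⌉₊ * ω t := modulus_le_nat_mul hmono hsub hzero ht _ hs hceil
    _ ≤ (1 + s / t) * ω t := by
      gcongr
      · exact modulus_nonneg hmono hzero ht
      · linarith [Nat.ceil_lt_add_one hst]

end Modulus

theorem concaveOn_one_add_div_mul {c t : ℝ} (hc : 0 ≤ c) (ht : 0 ≤ t) {S : Set ℝ}
    (hS : Convex ℝ S) : ConcaveOn ℝ S (fun s => (1 + s / t) * c) := by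
  have h := ((concaveOn_id hS).smul (div_nonneg hc ht)).add_const c
  refine h.congr fun s _ => ?_
  simp only [Pi.add_apply, id, smul_eq_mul]
  ring

theorem modulus_minimal_concave_majorant_estimate_general
    (l : ℝ)
    (ω ωbar : ℝ → ℝ)
    (hω_mono : MonotoneOn ω (Set.Icc 0 l))
    (hω_subadd : ∀ s t : ℝ, 0 ≤ s → 0 ≤ t → s + t ≤ l → ω (s + t) ≤ ω s + ω t)
    (hω_zero : ω 0 = 0)
    (hωbar_maj : ∀ t ∈ Set.Icc (0 : ℝ) l, ω t ≤ ωbar t)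
    (hωbar_min : ∀ g : ℝ → ℝ, ConcaveOn ℝ (Set.Icc 0 l) g →
      (∀ t ∈ Set.Icc (0 : ℝ) l, ω t ≤ g t) → ∀ t ∈ Set.Icc (0 : ℝ) l, ωbar t ≤ g t) :
    ∀ t η : ℝ, 0 < t → 0 < η → t ∈ Set.Icc (0 : ℝ) l → η * t ∈ Set.Icc (0 : ℝ) l →
      ω (η * t) ≤ ωbar (η * t) ∧ ωbar (η * t) ≤ (1 + η) * ω t := by
  intro t η ht _ htmem hηt
  refine ⟨hωbar_maj _ hηt, ?_⟩
  have hmaj := hωbar_min _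
    (concaveOn_one_add_div_mul (modulus_nonneg hω_mono hω_zero htmem) ht.le (convex_Icc 0 l))
    (fun s hs => modulus_le_affine hω_mono hω_subadd hω_zero ht htmem.2 hs) _ hηt
  rwa [mul_div_cancel_right₀ η ht.ne'] at hmaj

/-- If `ω` is a modulus of continuity on `[0, l]` and `ω̄` is its minimal concave majorant,
then for every `t > 0` and `η > 0` (with `t, ηt ∈ [0, l]`) one has
`ω(ηt) ≤ ω̄(ηt) ≤ (1 + η) ω(t)`. -/
theorem modulus_minimal_concave_majorant_estimate
    (l : ℝ) (hl : 0 < l)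
    (ω ωbar : ℝ → ℝ)
    (hω_cont : ContinuousOn ω (Set.Icc 0 l))
    (hω_mono : MonotoneOn ω (Set.Icc 0 l))
    (hω_subadd : ∀ s t : ℝ, 0 ≤ s → 0 ≤ t → s + t ≤ l → ω (s + t) ≤ ω s + ω t)
    (hω_zero : ω 0 = 0)
    (hωbar_concave : ConcaveOn ℝ (Set.Icc 0 l) ωbar)
    (hωbar_maj : ∀ t ∈ Set.Icc (0 : ℝ) l, ω t ≤ ωbar t)
    (hωbar_min : ∀ g : ℝ → ℝ, ConcaveOn ℝ (Set.Icc 0 l) g →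
      (∀ t ∈ Set.Icc (0 : ℝ) l, ω t ≤ g t) → ∀ t ∈ Set.Icc (0 : ℝ) l, ωbar t ≤ g t) :
    ∀ t η : ℝ, 0 < t → 0 < η → t ∈ Set.Icc (0 : ℝ) l → η * t ∈ Set.Icc (0 : ℝ) l →
      ω (η * t) ≤ ωbar (η * t) ∧ ωbar (η * t) ≤ (1 + η) * ω t :=
  modulus_minimal_concave_majorant_estimate_general l ω ωbar hω_mono hω_subadd hω_zero hωbar_maj
    hωbar_min
end

section
/- Let E be a metric space, L ≥ 0, and let g : E → ℝ be an L-Lipschitz function with g(z) ≤ 0 for all z ∈ E. Let ω̄ : [0,∞) → ℝ be nondecreasing and concave with ω̄(0) = 0, and define h : E → ℝ by h(z) = -ω̄(√(-g(z))). Then for all z, y ∈ E one has |h(z) - h(y)| ≤ ω̄(√(L · dist(z,y))). -/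
/-!
A concave `ω̄` with `ω̄ 0 = 0` is subadditive on `[0, ∞)`, so a nondecreasing one is its own
modulus of continuity there: `|ω̄ a - ω̄ b| ≤ ω̄ c` whenever `|a - b| ≤ c`. The square root is
`1/2`-Hölder, `|√x - √y| ≤ √|x - y|`, so `|√(-g z) - √(-g y)| ≤ √(L · dist z y)` for Lipschitz `g`.
-/

open Set

namespace ConcaveOn

variable {f : ℝ → ℝ}

theorem mul_map_le_map_mul (hf : ConcaveOn ℝ (Ici 0) f) (h0 : f 0 = 0) {t x : ℝ}
    (ht₀ : 0 ≤ t) (ht₁ : t ≤ 1) (hx : 0 ≤ x) : t * f x ≤ f (t * x) := by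
  simpa [h0] using hf.2 (mem_Ici.2 le_rfl) (mem_Ici.2 hx) (sub_nonneg.2 ht₁) ht₀ (by ring)

theorem map_add_le_add (hf : ConcaveOn ℝ (Ici 0) f) (h0 : f 0 = 0) {s t : ℝ}
    (hs : 0 ≤ s) (ht : 0 ≤ t) : f (s + t) ≤ f s + f t := by
  rcases (add_nonneg hs ht).eq_or_lt with hst | hst
  · obtain ⟨rfl, rfl⟩ : s = 0 ∧ t = 0 := ⟨by linarith, by linarith⟩
    simp [h0]
  have hs' := hf.mul_map_le_map_mul h0 (div_nonneg hs hst.le)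
    (div_le_one_of_le₀ (le_add_of_nonneg_right ht) hst.le) hst.le
  have ht' := hf.mul_map_le_map_mul h0 (div_nonneg ht hst.le)
    (div_le_one_of_le₀ (le_add_of_nonneg_left hs) hst.le) hst.le
  rw [div_mul_cancel₀ _ hst.ne'] at hs' ht'
  calc f (s + t) = s / (s + t) * f (s + t) + t / (s + t) * f (s + t) := by
        field_simp
    _ ≤ f s + f t := add_le_add hs' ht'

theorem abs_sub_le_of_abs_sub_le (hf : ConcaveOn ℝ (Ici 0) f) (h0 : f 0 = 0)
    (hmono : MonotoneOn f (Ici 0)) {a b c : ℝ} (ha : 0 ≤ a) (hb : 0 ≤ b) (habc : |a - b| ≤ c) :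
    |f a - f b| ≤ f c := by
  have hc : 0 ≤ c := (abs_nonneg _).trans habc
  have le_add_map : ∀ {x y}, 0 ≤ x → 0 ≤ y → x ≤ y + c → f x ≤ f y + f c :=
    fun hx hy hxy ↦ (hmono hx (add_nonneg hy hc) hxy).trans (hf.map_add_le_add h0 hy hc)
  obtain ⟨hab, hba⟩ := abs_sub_le_iff.1 habc
  exact abs_sub_le_iff.2 ⟨by linarith [le_add_map ha hb (by linarith)],
    by linarith [le_add_map hb ha (by linarith)]⟩

end ConcaveOn

namespace Real

theorem sqrt_le_sqrt_add_sqrt_abs_sub (x y : ℝ) : √x ≤ √y + √|x - y| := by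
  rw [sqrt_le_left (by positivity), add_sq, sq_sqrt', sq_sqrt (abs_nonneg _)]
  have : 0 ≤ 2 * √y * √|x - y| := by positivity
  linarith [le_abs_self (x - y), le_max_left y 0]

theorem abs_sqrt_sub_sqrt_le_sqrt_abs_sub (x y : ℝ) : |√x - √y| ≤ √|x - y| := by
  have hyx := sqrt_le_sqrt_add_sqrt_abs_sub y x
  rw [abs_sub_comm] at hyx
  exact abs_sub_le_iff.2 ⟨by linarith [sqrt_le_sqrt_add_sqrt_abs_sub x y], by linarith⟩

end Real

theorem modulus_estimate_of_lipschitz_barrier_general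
    {E : Type*} [MetricSpace E]
    (L : ℝ)
    (g : E → ℝ)
    (hg_lip : ∀ z y : E, |g z - g y| ≤ L * dist z y)
    (ωbar : ℝ → ℝ)
    (hmono : MonotoneOn ωbar (Set.Ici 0))
    (hconc : ConcaveOn ℝ (Set.Ici 0) ωbar)
    (hzero : ωbar 0 = 0) :
    ∀ z y : E, |(-ωbar (Real.sqrt (-g z))) - (-ωbar (Real.sqrt (-g y)))| ≤
      ωbar (Real.sqrt (L * dist z y)) := by
  intro z y
  have hsqrt : |√(-g y) - √(-g z)| ≤ √(L * dist z y) := by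
    refine (Real.abs_sqrt_sub_sqrt_le_sqrt_abs_sub _ _).trans (Real.sqrt_le_sqrt ?_)
    rw [neg_sub_neg]
    exact hg_lip z y
  rw [neg_sub_neg]
  exact hconc.abs_sub_le_of_abs_sub_le hzero hmono (Real.sqrt_nonneg _) (Real.sqrt_nonneg _) hsqrt

/-- If `g : E → ℝ` is `L`-Lipschitz and nonpositive, and `ω̄ : [0,∞) → ℝ` is nondecreasing and
concave with `ω̄(0) = 0`, then `h(z) = -ω̄(√(-g z))` satisfies
`|h z - h y| ≤ ω̄(√(L · dist z y))` for all `z, y`. -/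
theorem modulus_estimate_of_lipschitz_barrier
    {E : Type*} [MetricSpace E]
    (L : ℝ) (hL : 0 ≤ L)
    (g : E → ℝ)
    (hg_lip : ∀ z y : E, |g z - g y| ≤ L * dist z y)
    (hg_nonpos : ∀ z : E, g z ≤ 0)
    (ωbar : ℝ → ℝ)
    (hmono : MonotoneOn ωbar (Set.Ici 0))
    (hconc : ConcaveOn ℝ (Set.Ici 0) ωbar)
    (hzero : ωbar 0 = 0) :
    ∀ z y : E, |(-ωbar (Real.sqrt (-g z))) - (-ωbar (Real.sqrt (-g y)))| ≤
      ωbar (Real.sqrt (L * dist z y)) :=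
  modulus_estimate_of_lipschitz_barrier_general L g hg_lip ωbar hmono hconc hzero
end
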